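/- Let (X¹,…,Xᵐ) be a full exceptional collection in 𝒞. Then the family (Z¹,…,Zᵐ) defined by Zⁱ = Xⁱ for i < m−1, Z^{m−1} = T_{X^{m−1}}(Xᵐ), and Zᵐ = X^{m−1} is again a full exceptional collection in 𝒞. -/

import Mathlib

set_option linter.unusedSectionVars false
set_option linter.unusedVariables false


open CategoryTheory Category Limits Pretriangulated

universe v u

variable (C : Type u) [Category.{v} C] [Preadditive C] [HasZeroObject C]
  [HasShift C ℤ] [∀ n : ℤ, (shiftFunctor C n).Additive] [Pretriangulated C]
  [CategoryTheory.Linear (ZMod 2) C] [HasFiniteBiproducts C]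

variable {C}

/-- The predicate `P` on objects is closed under isomorphisms (the December 2024 Mathlib
`CategoryTheory.ClosedUnderIsomorphisms`, no longer in Mathlib). -/
class ClosedUnderIsomorphisms {D : Type u} [Category.{v} D] (P : D → Prop) : Prop where
  of_iso {X Y : D} (_ : X ≅ Y) (_ : P X) : P Y

/-- A triangulated subcategory (the December 2024 Mathlib `Triangulated.Subcategory`,
no longer in Mathlib). -/
structure Triangulated.Subcategory (D : Type u) [Category.{v} D] [HasZeroObject D]
    [HasShift D ℤ] [Preadditive D] [∀ n : ℤ, (shiftFunctor D n).Additive]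
    [Pretriangulated D] where
  P : D → Prop
  zero' : ∃ (Z : D) (_ : IsZero Z), P Z
  shift (X : D) (n : ℤ) : P X → P (X⟦n⟧)
  ext₂' (T : Triangle D) (_ : T ∈ distTriang D) : P T.obj₁ → P T.obj₃ →
    (∃ (Y : D) (_ : P Y), Nonempty (T.obj₂ ≅ Y))

lemma mem_of_iso (P : C → Prop) [ClosedUnderIsomorphisms P] {X Y : C} (e : X ≅ Y)
    (hX : P X) : P Y :=
  ClosedUnderIsomorphisms.of_iso e hX

open ZeroObject in
lemma Triangulated.Subcategory.zero (S : Triangulated.Subcategory C)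
    [ClosedUnderIsomorphisms S.P] : S.P 0 := by
  obtain ⟨Z, hZ, hP⟩ := S.zero'
  exact mem_of_iso S.P hZ.isoZero hP

lemma Triangulated.Subcategory.ext₂ (S : Triangulated.Subcategory C)
    [ClosedUnderIsomorphisms S.P] (T : Triangle C) (hT : T ∈ distTriang C)
    (h₁ : S.P T.obj₁) (h₃ : S.P T.obj₃) : S.P T.obj₂ := by
  obtain ⟨Y, hY, ⟨e⟩⟩ := S.ext₂' T hT h₁ h₃
  exact mem_of_iso S.P e.symm hY

/-- `X` is an exceptional object: `Hom(X, X[r]) = 0` for `r ≠ 0`, and `Hom(X, X)` is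
one-dimensional over `𝔽₂`, spanned by the identity. -/
def IsExceptional (X : C) : Prop :=
  (∀ r : ℤ, r ≠ 0 → ∀ f : X ⟶ X⟦r⟧, f = 0) ∧
  (𝟙 X ≠ 0) ∧
  Submodule.span (ZMod 2) {𝟙 X} = (⊤ : Submodule (ZMod 2) (X ⟶ X))

/-- `(X i)` is an exceptional collection: each object is exceptional and
`Hom(Xⁱ, Xᵏ[r]) = 0` for `i > k`. -/
def IsExceptionalCollection {m : ℕ} (X : Fin m → C) : Prop :=
  (∀ i, IsExceptional (X i)) ∧
  ∀ i k : Fin m, k < i → ∀ (r : ℤ) (f : X i ⟶ (X k)⟦r⟧), f = 0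

/-- The collection `(X i)` is full: any strictly full triangulated subcategory
(closed under isomorphisms) containing all the `X i` is all of `C`. -/
def IsFullCollection {m : ℕ} (X : Fin m → C) : Prop :=
  ∀ S : Triangulated.Subcategory C, ClosedUnderIsomorphisms S.P →
    (∀ i, S.P (X i)) → ∀ Z : C, S.P Z

/-- `T` is (a choice of) the mutated object `T_X(Y)`: there is a finite family
`f j : X ⟶ Y⟦r j⟧` forming a homogeneous basis of `⊕_r Hom(X, Y[r])`, and a distinguished
triangle `⊕_j X[-r j] → Y → T → (⊕_j X[-r j])[1]` whose first map is the evaluation map. -/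
def IsTwist (X Y T : C) : Prop :=
  ∃ (κ : ℕ) (r : Fin κ → ℤ) (f : ∀ j, X ⟶ Y⟦r j⟧),
    (∀ s : ℤ,
      LinearIndependent (ZMod 2)
        (fun j : {j : Fin κ // r j = s} =>
          f j.1 ≫ eqToHom (congrArg (fun t => Y⟦t⟧) j.2)) ∧
      Submodule.span (ZMod 2)
        (Set.range (fun j : {j : Fin κ // r j = s} =>
          f j.1 ≫ eqToHom (congrArg (fun t => Y⟦t⟧) j.2))) = ⊤) ∧
    ∃ (g : Y ⟶ T) (h : T ⟶ (⨁ fun j => X⟦-r j⟧)⟦(1:ℤ)⟧),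
      Triangle.mk
        (biproduct.desc fun j =>
          (f j)⟦-r j⟧' ≫ (shiftFunctorCompIsoId C (r j) (-r j) (add_neg_cancel _)).hom.app Y)
        g h ∈ distTriang C

section AuxMutation

lemma zmodtwo_cases : ∀ a : ZMod 2, a = 0 ∨ a = 1 := by decide

lemma red_hom {P Q : C} (u v w : ℤ) (hw : v - u = w)
    (h : ∀ g : P ⟶ Q⟦w⟧, g = 0) : ∀ f : P⟦u⟧ ⟶ Q⟦v⟧, f = 0 := by
  intro f
  have h2 : v + -u = w := by omega
  have h0 := h ((shiftFunctorCompIsoId C u (-u) (add_neg_cancel u)).inv.app P ≫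
    (shiftFunctor C (-u)).map f ≫ (shiftFunctorAdd' C v (-u) w h2).inv.app Q)
  have hm : (shiftFunctor C (-u)).map f = 0 := by
    rw [← cancel_epi ((shiftFunctorCompIsoId C u (-u) (add_neg_cancel u)).inv.app P),
        ← cancel_mono ((shiftFunctorAdd' C v (-u) w h2).inv.app Q)]
    simpa using h0
  exact (shiftFunctor C (-u)).map_injective (by rw [hm, Functor.map_zero])

def Van (P Q : C) : Prop := ∀ (u v : ℤ) (f : P⟦u⟧ ⟶ Q⟦v⟧), f = 0

lemma van_of {P Q : C} (h : ∀ (w : ℤ) (g : P ⟶ Q⟦w⟧), g = 0) : Van P Q :=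
  fun u v f => red_hom u v (v - u) rfl (h _) f

lemma Van.hom_right {P Q : C} (h : Van P Q) {v : ℤ} (f : P ⟶ Q⟦v⟧) : f = 0 := by
  have h0 := h 0 v ((shiftFunctorZero C ℤ).hom.app P ≫ f)
  rwa [← cancel_epi ((shiftFunctorZero C ℤ).hom.app P), comp_zero]

lemma Van.hom_left {P Q : C} (h : Van P Q) {u : ℤ} (f : P⟦u⟧ ⟶ Q) : f = 0 := by
  have h0 := h u 0 (f ≫ (shiftFunctorZero C ℤ).inv.app Q)
  rwa [← cancel_mono ((shiftFunctorZero C ℤ).inv.app Q), zero_comp]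

lemma Van.hom {P Q : C} (h : Van P Q) (f : P ⟶ Q) : f = 0 := by
  have h0 := h.hom_left ((shiftFunctorZero C ℤ).hom.app P ≫ f)
  rwa [← cancel_epi ((shiftFunctorZero C ℤ).hom.app P), comp_zero]

lemma hom_zero_of_shift {P Q : C} (v : ℤ) (h : ∀ η : P⟦-v⟧ ⟶ Q, η = 0) (g : P ⟶ Q⟦v⟧) :
    g = 0 := by
  have h0 := h ((shiftFunctor C (-v)).map g ≫
    (shiftFunctorCompIsoId C v (-v) (add_neg_cancel v)).hom.app Q)
  have hm : (shiftFunctor C (-v)).map g = 0 := by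
    rw [← cancel_mono ((shiftFunctorCompIsoId C v (-v) (add_neg_cancel v)).hom.app Q), zero_comp]
    exact h0
  exact (shiftFunctor C (-v)).map_injective (by rw [hm, Functor.map_zero])

lemma shift_hom_zero {P Q : C} (u w : ℤ) (hw : 0 - u = w)
    (h : ∀ g : P ⟶ Q⟦w⟧, g = 0) (φ : P⟦u⟧ ⟶ Q) : φ = 0 := by
  have h0 := red_hom u 0 w hw h (φ ≫ (shiftFunctorZero C ℤ).inv.app Q)
  rwa [← cancel_mono ((shiftFunctorZero C ℤ).inv.app Q), zero_comp]


lemma van_of' {P Q : C} (h : ∀ (u : ℤ) (g : P⟦u⟧ ⟶ Q), g = 0) : Van P Q := by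
  intro u v f
  refine hom_zero_of_shift v (fun η => ?_) f
  have h0 := h (u + -v) ((shiftFunctorAdd' C u (-v) (u + -v) rfl).hom.app P ≫ η)
  rwa [← cancel_epi ((shiftFunctorAdd' C u (-v) (u + -v) rfl).hom.app P), comp_zero]

lemma Van.shift_right {P Q : C} (h : Van P Q) (b : ℤ) : Van P (Q⟦b⟧) := by
  intro u v f
  have h0 := h u (b + v) (f ≫ (shiftFunctorAdd' C b v (b + v) rfl).inv.app Q)
  rwa [← cancel_mono ((shiftFunctorAdd' C b v (b + v) rfl).inv.app Q), zero_comp]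

lemma Van.shift_left {P Q : C} (h : Van P Q) (a : ℤ) : Van (P⟦a⟧) Q := by
  intro u v f
  have h0 := h (a + u) v ((shiftFunctorAdd' C a u (a + u) rfl).hom.app P ≫ f)
  rwa [← cancel_epi ((shiftFunctorAdd' C a u (a + u) rfl).hom.app P), comp_zero]

lemma van_biproduct {P : C} {κ : ℕ} (Qs : Fin κ → C) (h : ∀ j, Van P (Qs j)) :
    Van P (⨁ Qs) :=
  van_of' fun u f => biproduct.hom_ext _ _ fun j => by
    rw [zero_comp]; exact (h j).hom_left _

lemma biproduct_van {W : C} {κ : ℕ} (Qs : Fin κ → C) (h : ∀ j, Van (Qs j) W) :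
    Van (⨁ Qs) W :=
  van_of fun w g => biproduct.hom_ext' _ _ fun j => by
    rw [comp_zero]; exact (h j).hom_right _

lemma van_obj₃ (T : Triangle C) (hT : T ∈ distTriang C) {W : C}
    (h1 : Van W T.obj₁) (h2 : Van W T.obj₂) : Van W T.obj₃ :=
  van_of' fun u f => by
    obtain ⟨g, hg⟩ := T.coyoneda_exact₃ hT f (h1 u 1 _)
    rw [hg, h2.hom_left g, zero_comp]

lemma van_obj₃' (T : Triangle C) (hT : T ∈ distTriang C) {W : C}
    (h1 : Van T.obj₁ W) (h2 : Van T.obj₂ W) : Van T.obj₃ W :=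
  van_of fun w f => by
    obtain ⟨g, hg⟩ := T.yoneda_exact₃ hT f (h2.hom_right _)
    rw [hg, h1 1 w g, comp_zero]

lemma bij_precomp (T : Triangle C) (hT : T ∈ distTriang C) (W : C)
    (h0 : ∀ f : T.obj₁ ⟶ W, f = 0) (h1 : ∀ f : T.obj₁⟦(1:ℤ)⟧ ⟶ W, f = 0) :
    Function.Bijective (fun φ : T.obj₃ ⟶ W => T.mor₂ ≫ φ) := by
  constructor
  · intro φ ψ h
    have hh : T.mor₂ ≫ (φ - ψ) = 0 := by
      rw [Preadditive.comp_sub]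
      rw [show T.mor₂ ≫ φ = T.mor₂ ≫ ψ from h, sub_self]
    obtain ⟨g, hg⟩ := T.yoneda_exact₃ hT _ hh
    rw [h1 g, comp_zero] at hg
    exact sub_eq_zero.mp hg
  · intro ψ
    obtain ⟨g, hg⟩ := T.yoneda_exact₂ hT ψ (h0 _)
    exact ⟨g, hg.symm⟩

lemma bij_postcomp (T : Triangle C) (hT : T ∈ distTriang C) (W : C)
    (h0 : ∀ f : W ⟶ T.obj₁, f = 0) (h1 : ∀ f : W ⟶ T.obj₁⟦(1:ℤ)⟧, f = 0) :
    Function.Bijective (fun φ : W ⟶ T.obj₂ => φ ≫ T.mor₂) := by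
  constructor
  · intro φ ψ h
    have hh : (φ - ψ) ≫ T.mor₂ = 0 := by
      rw [Preadditive.sub_comp]
      rw [show φ ≫ T.mor₂ = ψ ≫ T.mor₂ from h, sub_self]
    obtain ⟨g, hg⟩ := T.coyoneda_exact₂ hT _ hh
    rw [h0 g, zero_comp] at hg
    exact sub_eq_zero.mp hg
  · intro ψ
    obtain ⟨g, hg⟩ := T.coyoneda_exact₃ hT ψ (h1 _)
    exact ⟨g, hg.symm⟩
section Core

variable {X Y : C} {κ : ℕ} (r : Fin κ → ℤ) (f : ∀ j, X ⟶ Y⟦r j⟧)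

/-- The components of the evaluation map. -/
noncomputable def twd (j : Fin κ) : (X⟦-r j⟧ : C) ⟶ Y :=
  (f j)⟦-r j⟧' ≫ (shiftFunctorCompIsoId C (r j) (-r j) (add_neg_cancel _)).hom.app Y

/-- The evaluation map. -/
noncomputable def twEv : (⨁ fun j => (X⟦-r j⟧ : C)) ⟶ Y := biproduct.desc (twd r f)

variable (Y) in
/-- Conjugation map `Hom(X, Y⟦s⟧) → Hom(X⟦-s⟧, Y)`. -/
noncomputable def Theta (s : ℤ) {X : C} (α : X ⟶ Y⟦s⟧) : (X⟦-s⟧ : C) ⟶ Y :=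
  α⟦-s⟧' ≫ (shiftFunctorCompIsoId C s (-s) (add_neg_cancel s)).hom.app Y

lemma Theta_add (s : ℤ) (α β : X ⟶ Y⟦s⟧) :
    Theta Y s (α + β) = Theta Y s α + Theta Y s β := by
  simp [Theta, Functor.map_add, Preadditive.add_comp]

lemma Theta_zero (s : ℤ) : Theta Y s (0 : X ⟶ Y⟦s⟧) = 0 := by
  simp [Theta]

lemma Theta_smul (s : ℤ) (a : ZMod 2) (α : X ⟶ Y⟦s⟧) :
    Theta Y s (a • α) = a • Theta Y s α := by
  rcases zmodtwo_cases a with rfl | rfl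
  · rw [zero_smul, zero_smul, Theta_zero]
  · rw [one_smul, one_smul]

lemma Theta_sum {ι : Type*} (s : ℤ) (t : Finset ι) (α : ι → (X ⟶ Y⟦s⟧)) :
    Theta Y s (∑ j ∈ t, α j) = ∑ j ∈ t, Theta Y s (α j) :=
  map_sum (AddMonoidHom.mk' (Theta Y s) (Theta_add s)) α t

lemma Theta_bijective (s : ℤ) : Function.Bijective (Theta Y s (X := X)) := by
  constructor
  · intro α β h
    apply (shiftFunctor C (-s)).map_injective
    exact (cancel_mono ((shiftFunctorCompIsoId C s (-s) (add_neg_cancel s)).hom.app Y)).mp h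
  · intro ψ
    obtain ⟨α, hα⟩ := (shiftFunctor C (-s)).map_surjective
      (ψ ≫ (shiftFunctorCompIsoId C s (-s) (add_neg_cancel s)).inv.app Y)
    refine ⟨α, ?_⟩
    rw [Theta, hα, assoc, Iso.inv_hom_id_app]
    simp

lemma twd_eq (s : ℤ) (j : Fin κ) (hj : r j = s) :
    eqToHom (show (X⟦-s⟧ : C) = X⟦-r j⟧ by rw [hj]) ≫ twd r f j =
      Theta Y s (f j ≫ eqToHom (congrArg (fun t => (Y⟦t⟧ : C)) hj)) := by
  subst hj
  simp [twd, Theta]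

lemma scalar_of_exc (hX : IsExceptional X) (s : ℤ) (j : Fin κ) (hj : r j = s)
    (δ : (X⟦-s⟧ : C) ⟶ X⟦-r j⟧) :
    ∃ a : ZMod 2, δ = a • eqToHom (show (X⟦-s⟧ : C) = X⟦-r j⟧ by rw [hj]) := by
  subst hj
  obtain ⟨γ, hγ⟩ := (shiftFunctor C (-r j)).map_surjective δ
  have hγ2 : γ ∈ Submodule.span (ZMod 2) {𝟙 X} := by rw [hX.2.2]; trivial
  obtain ⟨a, ha⟩ := Submodule.mem_span_singleton.mp hγ2
  refine ⟨a, ?_⟩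
  rw [← hγ, ← ha]
  rcases zmodtwo_cases a with rfl | rfl
  · simp
  · simp

lemma core_inj (hX : IsExceptional X)
    (hli : ∀ s : ℤ, LinearIndependent (ZMod 2)
      (fun j : {j : Fin κ // r j = s} =>
        f j.1 ≫ eqToHom (congrArg (fun t => (Y⟦t⟧ : C)) j.2)))
    (s : ℤ) (φ : (X⟦-s⟧ : C) ⟶ ⨁ fun j => (X⟦-r j⟧ : C))
    (hφ : φ ≫ twEv r f = 0) : φ = 0 := by
  classical
  have key : ∀ j : {j : Fin κ // r j = s}, ∃ a : ZMod 2,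
      φ ≫ biproduct.π _ j.1 = a • eqToHom (show (X⟦-s⟧ : C) = X⟦-r j.1⟧ by rw [j.2]) :=
    fun j => scalar_of_exc r hX s j.1 j.2 _
  choose a ha using key
  have hvan : ∀ j : Fin κ, r j ≠ s → φ ≫ biproduct.π _ j = 0 := fun j hj =>
    red_hom (-s) (-r j) (s - r j) (by ring) (hX.1 (s - r j) (by omega)) _
  have hdec : φ ≫ twEv r f = ∑ j : Fin κ, (φ ≫ biproduct.π _ j) ≫ twd r f j := by
    have h1 : twEv r f = ∑ j : Fin κ, biproduct.π _ j ≫ twd r f j := by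
      rw [twEv, ← Category.id_comp (biproduct.desc (twd r f)), ← biproduct.total,
        Preadditive.sum_comp]
      simp
    rw [h1, Preadditive.comp_sum]
    simp [Category.assoc]
  have hsplit : ∑ j : Fin κ, (φ ≫ biproduct.π _ j) ≫ twd r f j =
      ∑ j : {j : Fin κ // r j = s}, (φ ≫ biproduct.π _ j.1) ≫ twd r f j.1 := by
    rw [← Finset.sum_filter_of_ne (p := fun j => r j = s) (fun j _ hne => by
      by_contra hrj
      exact hne (by rw [hvan j hrj, zero_comp]))]
    exact Finset.sum_subtype _ (fun j => by simp) _
  have hcomb : Theta Y s (∑ j : {j : Fin κ // r j = s},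
      a j • (f j.1 ≫ eqToHom (congrArg (fun t => (Y⟦t⟧ : C)) j.2))) = 0 := by
    rw [Theta_sum]
    rw [← hφ, hdec, hsplit]
    apply Finset.sum_congr rfl
    intro j _
    rw [ha j, Linear.smul_comp, twd_eq r f s j.1 j.2, Theta_smul]
  have hz : (∑ j : {j : Fin κ // r j = s},
      a j • (f j.1 ≫ eqToHom (congrArg (fun t => (Y⟦t⟧ : C)) j.2))) = 0 :=
    (Theta_bijective s).1 (by rw [hcomb, Theta_zero])
  have haz : ∀ j, a j = 0 := Fintype.linearIndependent_iff.mp (hli s) a hz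
  apply biproduct.hom_ext
  intro j
  rw [zero_comp]
  by_cases hj : r j = s
  · rw [ha ⟨j, hj⟩, haz ⟨j, hj⟩, zero_smul]
  · exact hvan j hj

lemma core_surj (hX : IsExceptional X)
    (hsp : ∀ s : ℤ, Submodule.span (ZMod 2)
      (Set.range (fun j : {j : Fin κ // r j = s} =>
        f j.1 ≫ eqToHom (congrArg (fun t => (Y⟦t⟧ : C)) j.2))) = ⊤)
    (s : ℤ) (ψ : (X⟦-s⟧ : C) ⟶ Y) :
    ∃ φ : (X⟦-s⟧ : C) ⟶ ⨁ fun j => (X⟦-r j⟧ : C), φ ≫ twEv r f = ψ := by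
  classical
  obtain ⟨α, hα⟩ := (Theta_bijective (X := X) s).2 ψ
  have hmem : α ∈ Submodule.span (ZMod 2)
      (Set.range (fun j : {j : Fin κ // r j = s} =>
        f j.1 ≫ eqToHom (congrArg (fun t => (Y⟦t⟧ : C)) j.2))) := by
    rw [hsp s]; trivial
  obtain ⟨c, hc⟩ := (Submodule.mem_span_range_iff_exists_fun _).mp hmem
  refine ⟨∑ j : {j : Fin κ // r j = s},
    c j • (eqToHom (show (X⟦-s⟧ : C) = X⟦-r j.1⟧ by rw [j.2]) ≫ biproduct.ι (fun j => (X⟦-r j⟧ : C)) j.1), ?_⟩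
  rw [Preadditive.sum_comp]
  have : ∀ j : {j : Fin κ // r j = s},
      (c j • (eqToHom (show (X⟦-s⟧ : C) = X⟦-r j.1⟧ by rw [j.2]) ≫ biproduct.ι (fun j => (X⟦-r j⟧ : C)) j.1)) ≫
        twEv r f = c j • Theta Y s (f j.1 ≫ eqToHom (congrArg (fun t => (Y⟦t⟧ : C)) j.2)) := by
    intro j
    rw [Linear.smul_comp, assoc, twEv, biproduct.ι_desc, twd_eq r f s j.1 j.2]
  rw [Finset.sum_congr rfl (fun j _ => this j), ← Finset.sum_congr rfl
    (fun j _ => Theta_smul s (c j) _), ← Theta_sum, hc, hα]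

end Core

section Core2

variable {X Y : C} {κ : ℕ} (r : Fin κ → ℤ) (f : ∀ j, X ⟶ Y⟦r j⟧)

/-- Conjugation `Hom(X⟦u⟧, Q⟦v⟧) → Hom(X⟦-(v-u)⟧, Q)`. -/
noncomputable def conjE (u v : ℤ) {P Q : C} (φ : (P⟦u⟧ : C) ⟶ Q⟦v⟧) :
    (P⟦-(v - u)⟧ : C) ⟶ Q :=
  (shiftFunctorAdd' C u (-v) (-(v - u)) (by ring)).hom.app P ≫ φ⟦-v⟧' ≫
    (shiftFunctorCompIsoId C v (-v) (add_neg_cancel v)).hom.app Q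

lemma conjE_bijective (u v : ℤ) {P Q : C} :
    Function.Bijective (conjE u v (P := P) (Q := Q)) := by
  constructor
  · intro φ ψ h
    apply (shiftFunctor C (-v)).map_injective
    have h2 := h
    rw [conjE, conjE, cancel_epi ((shiftFunctorAdd' C u (-v) (-(v - u)) (by ring)).hom.app P),
      cancel_mono ((shiftFunctorCompIsoId C v (-v) (add_neg_cancel v)).hom.app Q)] at h2
    exact h2
  · intro ψ
    obtain ⟨φ, hφ⟩ := (shiftFunctor C (-v)).map_surjective
      ((shiftFunctorAdd' C u (-v) (-(v - u)) (by ring)).inv.app P ≫ ψ ≫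
        (shiftFunctorCompIsoId C v (-v) (add_neg_cancel v)).inv.app Q)
    refine ⟨φ, ?_⟩
    rw [conjE, hφ]
    simp

lemma conjE_comp (u v : ℤ) {P Q Q' : C} (φ : (P⟦u⟧ : C) ⟶ Q⟦v⟧) (g : Q ⟶ Q') :
    conjE u v (φ ≫ g⟦v⟧') = conjE u v φ ≫ g := by
  have hn := (shiftFunctorCompIsoId C v (-v) (add_neg_cancel v)).hom.naturality g
  simp only [Functor.comp_map, Functor.id_map] at hn
  rw [conjE, conjE, Functor.map_comp, assoc, assoc, hn]
  simp only [assoc]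

lemma core_bij₂ (hX : IsExceptional X)
    (hli : ∀ s : ℤ, LinearIndependent (ZMod 2)
      (fun j : {j : Fin κ // r j = s} =>
        f j.1 ≫ eqToHom (congrArg (fun t => (Y⟦t⟧ : C)) j.2)))
    (hsp : ∀ s : ℤ, Submodule.span (ZMod 2)
      (Set.range (fun j : {j : Fin κ // r j = s} =>
        f j.1 ≫ eqToHom (congrArg (fun t => (Y⟦t⟧ : C)) j.2))) = ⊤)
    (u v : ℤ) :
    Function.Bijective
      (fun φ : (X⟦u⟧ : C) ⟶ (⨁ fun j => (X⟦-r j⟧ : C))⟦v⟧ => φ ≫ (twEv r f)⟦v⟧') := by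
  constructor
  · intro φ ψ h
    apply (conjE_bijective u v).1
    have h2 : conjE u v (φ ≫ (twEv r f)⟦v⟧') = conjE u v (ψ ≫ (twEv r f)⟦v⟧') :=
      congrArg _ h
    rw [conjE_comp, conjE_comp] at h2
    have h3 : (conjE u v φ - conjE u v ψ) ≫ twEv r f = 0 := by
      rw [Preadditive.sub_comp, h2, sub_self]
    have h4 := core_inj r f hX hli (v - u) (conjE u v φ - conjE u v ψ) h3
    exact sub_eq_zero.mp h4
  · intro ψ
    obtain ⟨φ₀, hφ₀⟩ := core_surj r f hX hsp (v - u) (conjE u v ψ)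
    obtain ⟨φ, hφ⟩ := (conjE_bijective u v (Q := ⨁ fun j => (X⟦-r j⟧ : C))).2 φ₀
    refine ⟨φ, (conjE_bijective u v).1 ?_⟩
    rw [conjE_comp, hφ, hφ₀]

lemma van_X_T (hX : IsExceptional X)
    (hli : ∀ s : ℤ, LinearIndependent (ZMod 2)
      (fun j : {j : Fin κ // r j = s} =>
        f j.1 ≫ eqToHom (congrArg (fun t => (Y⟦t⟧ : C)) j.2)))
    (hsp : ∀ s : ℤ, Submodule.span (ZMod 2)
      (Set.range (fun j : {j : Fin κ // r j = s} =>
        f j.1 ≫ eqToHom (congrArg (fun t => (Y⟦t⟧ : C)) j.2))) = ⊤)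
    {T : C} (g : Y ⟶ T) (h : T ⟶ (⨁ fun j => (X⟦-r j⟧ : C))⟦(1:ℤ)⟧)
    (hdist : Triangle.mk (twEv r f) g h ∈ distTriang C) : Van X T := by
  apply van_of'
  intro u φ
  have h31 := comp_distTriang_mor_zero₃₁ _ hdist
  have hφh : φ ≫ h = 0 := by
    apply (core_bij₂ r f hX hli hsp u 1).1
    show (φ ≫ h) ≫ (twEv r f)⟦(1:ℤ)⟧' = (0 : (X⟦u⟧:C) ⟶ _) ≫ (twEv r f)⟦(1:ℤ)⟧'
    rw [assoc, zero_comp]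
    rw [show h ≫ (twEv r f)⟦(1:ℤ)⟧' = 0 from h31, comp_zero]
  obtain ⟨ψ, hψ⟩ := Triangle.coyoneda_exact₃ _ hdist φ hφh
  obtain ⟨χ, hχ⟩ := (core_bij₂ r f hX hli hsp u 0).2 (ψ ≫ (shiftFunctorZero C ℤ).inv.app Y)
  have hz := (shiftFunctorZero C ℤ).hom.naturality (twEv r f)
  simp only [Functor.id_map] at hz
  have hχ' : χ ≫ (twEv r f)⟦(0:ℤ)⟧' = ψ ≫ (shiftFunctorZero C ℤ).inv.app Y := hχ
  have hψ2 : ψ = (χ ≫ (shiftFunctorZero C ℤ).hom.app (⨁ fun j => (X⟦-r j⟧ : C))) ≫ twEv r f := by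
    rw [assoc, ← hz, ← assoc, hχ']
    exact ((assoc _ _ _).trans ((congrArg (ψ ≫ ·) ((shiftFunctorZero C ℤ).inv_hom_id_app Y)).trans
      (comp_id ψ))).symm
  have h12' : twEv r f ≫ g = 0 := comp_distTriang_mor_zero₁₂ _ hdist
  have hm2 : (Triangle.mk (twEv r f) g h).mor₂ = g := rfl
  rw [hψ, hm2, hψ2]
  exact (assoc _ _ _).trans ((congrArg (_ ≫ ·) h12').trans comp_zero)

end Core2

section ExcT

variable {X Y : C} {κ : ℕ} (r : Fin κ → ℤ) (f : ∀ j, X ⟶ Y⟦r j⟧)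

lemma isExceptional_T (hX : IsExceptional X) (hY : IsExceptional Y) (hvYX : Van Y X)
    (hli : ∀ s : ℤ, LinearIndependent (ZMod 2)
      (fun j : {j : Fin κ // r j = s} =>
        f j.1 ≫ eqToHom (congrArg (fun t => (Y⟦t⟧ : C)) j.2)))
    (hsp : ∀ s : ℤ, Submodule.span (ZMod 2)
      (Set.range (fun j : {j : Fin κ // r j = s} =>
        f j.1 ≫ eqToHom (congrArg (fun t => (Y⟦t⟧ : C)) j.2))) = ⊤)
    {T : C} (g : Y ⟶ T) (h : T ⟶ (⨁ fun j => (X⟦-r j⟧ : C))⟦(1:ℤ)⟧)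
    (hdist : Triangle.mk (twEv r f) g h ∈ distTriang C) : IsExceptional T := by
  have hvXT : Van X T := van_X_T r f hX hli hsp g h hdist
  have hvYB : Van Y (⨁ fun j => (X⟦-r j⟧ : C)) :=
    van_biproduct _ (fun j => hvYX.shift_right (-r j))
  have hvBT : Van (⨁ fun j => (X⟦-r j⟧ : C)) T :=
    biproduct_van _ (fun j => hvXT.shift_left (-r j))
  -- the equivalence (T ⟶ T) ≃ (Y ⟶ Y)
  let e₁ : ((Triangle.mk (twEv r f) g h).obj₃ ⟶ T) ≃ ((Triangle.mk (twEv r f) g h).obj₂ ⟶ T) :=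
    Equiv.ofBijective _ (bij_precomp _ hdist T (fun f0 => hvBT.hom f0)
      (fun f0 => hvBT.hom_left f0))
  let e₂ : (Y ⟶ (Triangle.mk (twEv r f) g h).obj₂) ≃ (Y ⟶ (Triangle.mk (twEv r f) g h).obj₃) :=
    Equiv.ofBijective _ (bij_postcomp _ hdist Y (fun f0 => hvYB.hom f0)
      (fun f0 => hvYB.hom_right f0))
  let E : (T ⟶ T) ≃ (Y ⟶ Y) := e₁.trans e₂.symm
  have he₁ : e₁ 0 = 0 := comp_zero
  have he₂ : e₂ 0 = 0 := zero_comp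
  have hE0 : E 0 = 0 := by
    show e₂.symm (e₁ 0) = 0
    exact e₂.symm_apply_eq.mpr (he₁.trans he₂.symm)
  have hYel : ∀ α : Y ⟶ Y, α = 0 ∨ α = 𝟙 Y := by
    intro α
    have hm : α ∈ Submodule.span (ZMod 2) {𝟙 Y} := by rw [hY.2.2]; trivial
    obtain ⟨a, ha⟩ := Submodule.mem_span_singleton.mp hm
    rcases zmodtwo_cases a with rfl | rfl
    · left; rw [← ha, zero_smul]
    · right; rw [← ha, one_smul]
  have h1T : 𝟙 T ≠ 0 := by
    intro h0
    have hall : ∀ ρ : T ⟶ T, ρ = 0 := fun ρ => by rw [← comp_id ρ, h0, comp_zero]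
    have h1Y : (𝟙 Y : Y ⟶ Y) = 0 := by
      have hc := congrArg E (hall (E.symm (𝟙 Y)))
      rwa [Equiv.apply_symm_apply, hE0] at hc
    exact hY.2.1 h1Y
  refine ⟨?_, h1T, ?_⟩
  · -- vanishing in nonzero degrees
    intro t ht φ
    have hYT : ∀ ξ : Y ⟶ (T⟦t⟧ : C), ξ = 0 := by
      intro ξ
      refine hom_zero_of_shift t (fun η => ?_) ξ
      have hηh : η ≫ (Triangle.mk (twEv r f) g h).mor₃ = 0 := hvYB (-t) 1 _
      obtain ⟨χ, hχ⟩ := Triangle.coyoneda_exact₃ _ hdist η hηh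
      have hχ0 : χ = 0 := shift_hom_zero (-t) t (by ring) (hY.1 t ht) χ
      rw [hχ, hχ0, zero_comp]
      rfl
    have hgφ : g ≫ φ = 0 := hYT _
    have hinj := (bij_precomp _ hdist (T⟦t⟧ : C) (fun f0 => hvBT.hom_right f0)
      (fun f0 => hvBT 1 t f0)).1
    refine hinj (a₁ := φ) (a₂ := 0) ?_
    show g ≫ φ = g ≫ 0
    rw [comp_zero, hgφ]
  · -- span of the identity
    rw [Submodule.eq_top_iff']
    intro φ
    rcases hYel (E φ) with h0 | h1
    · have hφ0 : φ = 0 := by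
        have hc := congrArg E.symm h0
        rwa [Equiv.symm_apply_apply, ← hE0, Equiv.symm_apply_apply] at hc
      rw [hφ0]; exact zero_mem _
    · rcases hYel (E (𝟙 T)) with h2 | h2
      · exfalso
        apply h1T
        have hc := congrArg E.symm h2
        rwa [Equiv.symm_apply_apply, ← hE0, Equiv.symm_apply_apply] at hc
      · have hφ1 : φ = 𝟙 T := E.injective (by rw [h1, h2])
        rw [hφ1]
        exact Submodule.mem_span_singleton_self _

end ExcT

section Biprod

noncomputable def binFinIso {n : ℕ} (Qs : Fin (n + 1) → C) :
    (⨁ Qs : C) ≅ Qs 0 ⊞ ⨁ (fun i : Fin n => Qs i.succ) where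
  hom := biprod.lift (biproduct.π Qs 0) (biproduct.lift fun i => biproduct.π Qs i.succ)
  inv := biprod.desc (biproduct.ι Qs 0) (biproduct.desc fun i => biproduct.ι Qs i.succ)
  hom_inv_id := by
    rw [biprod.lift_desc, biproduct.lift_desc,
      ← Fin.sum_univ_succ (fun j => biproduct.π Qs j ≫ biproduct.ι Qs j), biproduct.total]
  inv_hom_id := by
    apply biprod.hom_ext'
    · apply biprod.hom_ext
      · simp
      · apply biproduct.hom_ext; intro k
        simp [biproduct.ι_π_ne _ (Fin.succ_ne_zero k).symm]
    · apply biprod.hom_ext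
      · apply biproduct.hom_ext'; intro i
        simp [biproduct.ι_π_ne _ (Fin.succ_ne_zero i)]
      · apply biproduct.hom_ext'; intro i
        apply biproduct.hom_ext; intro k
        by_cases hik : i = k
        · subst hik; simp
        · have h1 : biproduct.ι Qs i.succ ≫ biproduct.π Qs k.succ = 0 :=
            biproduct.ι_π_ne _ (fun hc => hik (Fin.succ_inj.mp hc))
          have h2 : biproduct.ι (fun i : Fin n => Qs i.succ) i ≫
              biproduct.π (fun i : Fin n => Qs i.succ) k = 0 := biproduct.ι_π_ne _ hik
          simp [h1, h2]

lemma subcat_P_biproduct (S : Triangulated.Subcategory C) [ClosedUnderIsomorphisms S.P]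
    {κ : ℕ} (Qs : Fin κ → C) (hQ : ∀ j, S.P (Qs j)) : S.P (⨁ Qs) := by
  induction κ with
  | zero =>
    have hz : IsZero (⨁ Qs : C) := by
      rw [IsZero.iff_id_eq_zero]
      apply biproduct.hom_ext
      intro j
      exact j.elim0
    exact mem_of_iso S.P hz.isoZero.symm S.zero
  | succ n ih =>
    have hbin : S.P ((Qs 0 ⊞ ⨁ (fun i : Fin n => Qs i.succ)) : C) :=
      S.ext₂ _ (binaryBiproductTriangle_distinguished (Qs 0) (⨁ fun i : Fin n => Qs i.succ))
        (hQ 0) (ih _ (fun i => hQ i.succ))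
    exact mem_of_iso S.P (binFinIso Qs).symm hbin

end Biprod


end AuxMutation

/-- if `(X⁰, …, X^{m+1})` is a full exceptional collection, so is the
collection `(X⁰, …, X^{m-1}, T_{Xᵐ}(X^{m+1}), Xᵐ)` obtained by mutating the last two
objects. -/
theorem full_exceptional_of_last_mutation
    (hfin : ∀ X Y : C, (∀ r : ℤ, Module.Finite (ZMod 2) (X ⟶ Y⟦r⟧)) ∧
      {r : ℤ | ∃ f : X ⟶ Y⟦r⟧, f ≠ 0}.Finite)
    {m : ℕ} (X Z : Fin (m + 2) → C)
    (hexc : IsExceptionalCollection X) (hfull : IsFullCollection X)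
    (hZ : ∀ i : Fin (m + 2), (i : ℕ) < m → Z i = X i)
    (hZtwist : IsTwist (X ⟨m, by omega⟩) (X ⟨m + 1, by omega⟩) (Z ⟨m, by omega⟩))
    (hZlast : Z ⟨m + 1, by omega⟩ = X ⟨m, by omega⟩) :
    IsExceptionalCollection Z ∧ IsFullCollection Z := by
  obtain ⟨hexc1, hexc2⟩ := hexc
  obtain ⟨κ, r, ff, hb, g, h, hdist⟩ := hZtwist
  have hli := fun s => (hb s).1
  have hsp := fun s => (hb s).2
  have hdist' : Triangle.mk (twEv r ff) g h ∈ distTriang C := hdist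
  have hXm : IsExceptional (X ⟨m, by omega⟩) := hexc1 _
  have hltm : (⟨m, by omega⟩ : Fin (m + 2)) < ⟨m + 1, by omega⟩ := by
    simp [Fin.lt_def]
  have hvYXm : Van (X ⟨m + 1, by omega⟩) (X ⟨m, by omega⟩) :=
    van_of (fun w φ => hexc2 _ _ hltm w φ)
  have hvXmT : Van (X ⟨m, by omega⟩) (Z ⟨m, by omega⟩) :=
    van_X_T r ff hXm hli hsp g h hdist'
  have hexcT : IsExceptional (Z ⟨m, by omega⟩) :=
    isExceptional_T r ff hXm (hexc1 _) hvYXm hli hsp g h hdist'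
  have hvTXk : ∀ k : Fin (m + 2), (k : ℕ) < m → Van (Z ⟨m, by omega⟩) (X k) := by
    intro k hk
    have hkm : k < (⟨m, by omega⟩ : Fin (m + 2)) := by simp [Fin.lt_def]; omega
    have hkm1 : k < (⟨m + 1, by omega⟩ : Fin (m + 2)) := by simp [Fin.lt_def]; omega
    have h1 : Van (⨁ fun j => ((X ⟨m, by omega⟩)⟦-r j⟧ : C)) (X k) :=
      biproduct_van _ (fun j =>
        (van_of (fun w φ => hexc2 _ _ hkm w φ)).shift_left (-r j))
    have h2 : Van (X ⟨m + 1, by omega⟩) (X k) :=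
      van_of (fun w φ => hexc2 _ _ hkm1 w φ)
    exact van_obj₃' (Triangle.mk (twEv r ff) g h) hdist' h1 h2
  constructor
  · constructor
    · -- each object is exceptional
      intro i
      rcases lt_trichotomy (i : ℕ) m with hi | hi | hi
      · rw [hZ i hi]; exact hexc1 i
      · have hieq : i = ⟨m, by omega⟩ := Fin.ext hi
        rw [hieq]; exact hexcT
      · have hieq : i = ⟨m + 1, by omega⟩ := Fin.ext (show (i:ℕ) = m + 1 by have := i.isLt; omega)
        rw [hieq, hZlast]; exact hexc1 _
    · -- vanishing
      intro i k hki
      have hk2 : (k : ℕ) < (i : ℕ) := hki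
      rcases lt_trichotomy (i : ℕ) m with hi | hi | hi
      · rw [hZ i hi, hZ k (by omega)]
        exact fun w φ => hexc2 i k hki w φ
      · have hieq : i = ⟨m, by omega⟩ := Fin.ext hi
        rw [hieq, hZ k (by omega)]
        exact fun w φ => (hvTXk k (by omega)).hom_right φ
      · have hieq : i = ⟨m + 1, by omega⟩ := Fin.ext (show (i:ℕ) = m + 1 by have := i.isLt; omega)
        rcases lt_trichotomy (k : ℕ) m with hk | hk | hk
        · rw [hieq, hZlast, hZ k hk]
          have hkm : k < (⟨m, by omega⟩ : Fin (m + 2)) := by simp [Fin.lt_def]; omega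
          exact fun w φ => hexc2 _ k hkm w φ
        · have hkeq : k = ⟨m, by omega⟩ := Fin.ext hk
          rw [hieq, hkeq, hZlast]
          exact fun w φ => hvXmT.hom_right φ
        · omega
  · -- fullness
    intro S hiso hZS W
    haveI := hiso
    apply hfull S hiso _ W
    intro i
    have hXmS : S.P (X ⟨m, by omega⟩) := by rw [← hZlast]; exact hZS _
    rcases lt_trichotomy (i : ℕ) m with hi | hi | hi
    · rw [← hZ i hi]; exact hZS i
    · have hieq : i = ⟨m, by omega⟩ := Fin.ext hi
      rw [hieq]; exact hXmS
    · have hieq : i = ⟨m + 1, by omega⟩ := Fin.ext (show (i:ℕ) = m + 1 by have := i.isLt; omega)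
      have hB : S.P (⨁ fun j => ((X ⟨m, by omega⟩)⟦-r j⟧ : C)) :=
        subcat_P_biproduct S _ (fun j => S.shift _ (-r j) hXmS)
      have hT : S.P (Z ⟨m, by omega⟩) := hZS _
      have := S.ext₂ (Triangle.mk (twEv r ff) g h) hdist' hB hT
      rw [hieq]
      exact this
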